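/- Let b < 0, K ≥ 0, and define a_k = b for 0 ≤ k < K and a_k = 2 log((k+1)/(k+2)) for k ≥ K; let s_n = ∑_{k=0}^{n-1} a_k. Then s_n = nb for n ≤ K and s_n = Kb + 2 log((K+1)/(n+1)) for n > K, and ∑_{n≥1} e^{s_n} < e^b (1 - e^{bK})/(1 - e^b) + e^{bK}(K+1). Moreover, ∑_n (n+1) e^{s_n} = ∞. -/

import Mathlib

/-- The Birkhoff sums `s_n = ∑_{k<n} a_k` of the Hofbauer–Keller potential:
`a_k = b` for `k < K` and `a_k = 2 log((k+1)/(k+2))` for `k ≥ K`. -/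
noncomputable def sHK (b : ℝ) (K : ℕ) (n : ℕ) : ℝ :=
  ∑ k ∈ Finset.range n,
    (if k < K then b else 2 * Real.log (((k : ℝ) + 1) / ((k : ℝ) + 2)))

/-! For `n ≥ K` the logarithms telescope, so `e^{s_n} = e^{bK} (K+1)^2 / (n+1)^2`. Hence the
first `K` terms of `∑ e^{s_{n+1}}` form a geometric sum, while the tail is
`e^{bK} (K+1)^2 ∑_{m ≥ K+2} 1/m^2`, strictly below `e^{bK} (K+1)` by comparison with the
telescoping series `∑ (1/(m-1) - 1/m)`. Likewise `(n+1) e^{s_n}` is eventually a constant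
multiple of the harmonic series. -/

open Filter Finset Real Topology

lemma hasSum_sub_succ_of_antitone {f : ℕ → ℝ} (hf : Antitone f)
    (hlim : Tendsto f atTop (𝓝 0)) :
    HasSum (fun n => f n - f (n + 1)) (f 0) := by
  rw [hasSum_iff_tendsto_nat_of_nonneg fun n => sub_nonneg.mpr (hf n.le_succ)]
  simp_rw [sum_range_sub']
  simpa using tendsto_const_nhds (x := f 0) |>.sub hlim

section InverseSquareTail

variable {a : ℝ}

lemma one_div_add_one_sq_lt_sub (ha : 0 < a) {x : ℝ} (hx : 0 ≤ x) :
    1 / (x + a + 1) ^ 2 < 1 / (x + a) - 1 / (x + a + 1) := by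
  rw [div_sub_div _ _ (by positivity) (by positivity),
    div_lt_div_iff₀ (by positivity) (by positivity)]
  nlinarith

lemma hasSum_one_div_add_sub_one_div_add_one (ha : 0 < a) :
    HasSum (fun n : ℕ => 1 / ((n : ℝ) + a) - 1 / ((n : ℝ) + a + 1)) (1 / a) := by
  have := hasSum_sub_succ_of_antitone (f := fun n : ℕ => 1 / ((n : ℝ) + a)) ?_ ?_
  · simpa [add_right_comm] using this
  · intro m n hmn
    dsimp only
    gcongr
  · exact tendsto_const_nhds.div_atTop
      (tendsto_atTop_add_const_right _ a tendsto_natCast_atTop_atTop)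

lemma summable_one_div_add_one_sq (ha : 0 < a) :
    Summable fun n : ℕ => 1 / ((n : ℝ) + a + 1) ^ 2 :=
  (hasSum_one_div_add_sub_one_div_add_one ha).summable.of_nonneg_of_le (fun _ => by positivity)
    fun n => (one_div_add_one_sq_lt_sub ha n.cast_nonneg).le

lemma tsum_one_div_add_one_sq_lt (ha : 0 < a) :
    ∑' n : ℕ, 1 / ((n : ℝ) + a + 1) ^ 2 < 1 / a := by
  refine hasSum_lt (f := fun n : ℕ => 1 / ((n : ℝ) + a + 1) ^ 2) (i := 0)
    (fun n => (one_div_add_one_sq_lt_sub ha n.cast_nonneg).le) ?_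
    (summable_one_div_add_one_sq ha).hasSum (hasSum_one_div_add_sub_one_div_add_one ha)
  simpa using one_div_add_one_sq_lt_sub ha le_rfl

end InverseSquareTail

lemma not_summable_one_div_natCast_add_one : ¬Summable fun n : ℕ => 1 / ((n : ℝ) + 1) := by
  exact_mod_cast mt (summable_nat_add_iff 1).mp Real.not_summable_one_div_natCast

lemma sum_range_pow_succ {x : ℝ} (hx : x ≠ 1) (n : ℕ) :
    ∑ i ∈ range n, x ^ (i + 1) = x * (1 - x ^ n) / (1 - x) := by
  simp_rw [pow_succ', ← mul_sum, geom_sum_eq hx, mul_div_assoc, ← neg_div_neg_eq (x ^ n - 1),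
    neg_sub]

section HofbauerKeller

variable (b : ℝ) (K : ℕ)

lemma sHK_of_le {n : ℕ} (hn : n ≤ K) : sHK b K n = n * b := by
  rw [sHK, sum_congr rfl fun k hk => if_pos ((mem_range.mp hk).trans_le hn)]
  simp [mul_comm]

lemma sHK_of_ge {n : ℕ} (hn : K ≤ n) :
    sHK b K n = K * b + 2 * log (((K : ℝ) + 1) / ((n : ℝ) + 1)) := by
  induction n, hn using Nat.le_induction with
  | base => simp [sHK_of_le b K le_rfl]
  | succ n hn ih =>
    rw [sHK, sum_range_succ, ← sHK, ih, if_neg hn.not_gt, add_assoc, ← mul_add,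
      ← log_mul (by positivity) (by positivity), div_mul_div_cancel₀ (by positivity)]
    push_cast
    ring_nf

lemma exp_sHK_of_ge {n : ℕ} (hn : K ≤ n) :
    exp (sHK b K n) = exp (b * K) * ((K : ℝ) + 1) ^ 2 / ((n : ℝ) + 1) ^ 2 := by
  rw [sHK_of_ge b K hn, exp_add, mul_comm (K : ℝ), ← log_rpow (by positivity),
    exp_log (by positivity), rpow_two, div_pow, mul_div_assoc]

lemma exp_sHK_add_succ (n : ℕ) :
    exp (sHK b K (n + K + 1))
      = exp (b * K) * ((K : ℝ) + 1) ^ 2 / ((n : ℝ) + ((K : ℝ) + 1) + 1) ^ 2 := by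
  rw [exp_sHK_of_ge b K (by omega)]
  push_cast
  ring_nf

lemma sum_range_exp_sHK_succ (hb : b ≠ 0) :
    ∑ i ∈ range K, exp (sHK b K (i + 1)) = exp b * (1 - exp (b * K)) / (1 - exp b) := by
  rw [sum_congr rfl fun i hi => by rw [sHK_of_le b K (mem_range.mp hi), exp_nat_mul],
    sum_range_pow_succ (mt (exp_eq_one_iff b).mp hb), ← exp_nat_mul, mul_comm (K : ℝ)]

lemma not_summable_succ_mul_exp_sHK :
    ¬Summable fun n : ℕ => ((n : ℝ) + 1) * exp (sHK b K n) := by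
  have hC : exp (b * K) * ((K : ℝ) + 1) ^ 2 ≠ 0 := by positivity
  have heq : (fun n : ℕ => exp (b * K) * ((K : ℝ) + 1) ^ 2 * (1 / ((n : ℝ) + 1)))
      =ᶠ[cofinite] fun n => ((n : ℝ) + 1) * exp (sHK b K n) := by
    filter_upwards [Nat.cofinite_eq_atTop ▸ eventually_ge_atTop K] with n hn
    rw [exp_sHK_of_ge b K hn]
    field_simp
  rw [← summable_congr_cofinite heq, summable_mul_left_iff hC]
  exact not_summable_one_div_natCast_add_one

end HofbauerKeller

/-- For `b < 0` and `K ≥ 0`: `s_n = nb` for `n ≤ K`,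
`s_n = Kb + 2 log((K+1)/(n+1))` for `n > K`,
`∑_{n ≥ 1} e^{s_n} < e^b (1-e^{bK})/(1-e^b) + e^{bK}(K+1)`, and
`∑_n (n+1) e^{s_n} = ∞`. -/
theorem stmt9 (b : ℝ) (hb : b < 0) (K : ℕ) :
    (∀ n : ℕ, n ≤ K → sHK b K n = n * b) ∧
    (∀ n : ℕ, K < n →
      sHK b K n = K * b + 2 * Real.log (((K : ℝ) + 1) / ((n : ℝ) + 1))) ∧
    Summable (fun n : ℕ => Real.exp (sHK b K (n + 1))) ∧
    (∑' n : ℕ, Real.exp (sHK b K (n + 1)))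
      < Real.exp b * (1 - Real.exp (b * K)) / (1 - Real.exp b)
        + Real.exp (b * K) * ((K : ℝ) + 1) ∧
    ¬ Summable (fun n : ℕ => ((n : ℝ) + 1) * Real.exp (sHK b K n)) := by
  have hK : (0 : ℝ) < K + 1 := by positivity
  have htail : Summable fun n : ℕ => exp (sHK b K (n + K + 1)) := by
    simpa only [exp_sHK_add_succ, mul_one_div] using (summable_one_div_add_one_sq hK).mul_left _
  have hsum := (summable_nat_add_iff (f := fun n => exp (sHK b K (n + 1))) K).mp htail
  refine ⟨fun n => sHK_of_le b K, fun n hn => sHK_of_ge b K hn.le, hsum, ?_,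
    not_summable_succ_mul_exp_sHK b K⟩
  rw [← hsum.sum_add_tsum_nat_add K, sum_range_exp_sHK_succ b K hb.ne]
  refine add_lt_add_right ?_ _
  calc ∑' n : ℕ, exp (sHK b K (n + K + 1))
      = exp (b * K) * ((K : ℝ) + 1) ^ 2
          * ∑' n : ℕ, 1 / ((n : ℝ) + ((K : ℝ) + 1) + 1) ^ 2 := by
        simp only [exp_sHK_add_succ, ← tsum_mul_left, mul_one_div]
    _ < exp (b * K) * ((K : ℝ) + 1) ^ 2 * (1 / ((K : ℝ) + 1)) := by
        gcongr
        exact tsum_one_div_add_one_sq_lt hK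
    _ = exp (b * K) * ((K : ℝ) + 1) := by field_simp
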